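/- arXiv:2601.08548 — 8 statements merged into one kernel-verified Lean document; each statement's English description precedes it below -/
import Mathlib

section
/- Let k, q, p₀, β, c be real constants and let f(p) = k·(p + p₀)^{1+q} (real power). If p : ℝ × ℝ → ℝ is smooth with p(t,x) + p₀ > 0 everywhere and p solves ∂²ₜ(f(p)) − β ∂ₜ∂²ₓp = c² ∂²ₓp at every point, then for every λ > 0 the scaled function p̃(t,x) = λ⁻²·(p(t, λ^{−q} x) + p₀) − p₀ also satisfies p̃(t,x) + p₀ > 0 everywhere and solves the same equation at every point. (This is the finite form of the scaling symmetry X₃ = q x ∂ₓ − 2(p + p₀)∂ₚ.) -/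
noncomputable def Dt (F : ℝ × ℝ → ℝ) : ℝ × ℝ → ℝ :=
  fun z => deriv (fun s => F (s, z.2)) z.1

noncomputable def Dx (F : ℝ × ℝ → ℝ) : ℝ × ℝ → ℝ :=
  fun z => deriv (fun y => F (z.1, y)) z.2

/-- `p` solves the generalized Westervelt equation `(f(p))_tt − β p_xxt = c² p_xx` everywhere. -/
def IsWesterveltSolution (f : ℝ → ℝ) (β c : ℝ) (p : ℝ × ℝ → ℝ) : Prop :=
  ∀ z : ℝ × ℝ, Dt (Dt (fun w => f (p w))) z - β * Dt (Dx (Dx p)) z = c ^ 2 * Dx (Dx p) z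

/-- Unconditional chain rule for composition with scaling, over ℝ. -/
lemma deriv_comp_const_mul'' (f : ℝ → ℝ) (c x : ℝ) :
    deriv (fun y => f (c * y)) x = c * deriv f (c * x) := by
  rcases eq_or_ne c 0 with rfl | hc
  · simp
  by_cases h : DifferentiableAt ℝ f (c * x)
  · have h1 : HasDerivAt (fun y : ℝ => c * y) c x := by
      simpa using (hasDerivAt_id x).const_mul c
    have h2 : deriv (fun y => f (c * y)) x = deriv f (c * x) * c := by
      simpa [Function.comp_def] using (h.hasDerivAt.comp x h1).deriv
    rw [h2]; ring
  · have h3 : ¬ DifferentiableAt ℝ (fun y => f (c * y)) x := by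
      intro hd
      apply h
      have h5 : DifferentiableAt ℝ ((fun y => f (c * y)) ∘ fun y : ℝ => c⁻¹ * y) (c * x) := by
        apply DifferentiableAt.comp
        · rw [inv_mul_cancel_left₀ hc]; exact hd
        · exact differentiableAt_id.const_mul _
      have he : ((fun y => f (c * y)) ∘ fun y : ℝ => c⁻¹ * y) = f := by
        funext y; simp [Function.comp_def, mul_inv_cancel_left₀ hc]
      rwa [he] at h5
    rw [deriv_zero_of_not_differentiableAt h, deriv_zero_of_not_differentiableAt h3, mul_zero]

/-- Finite form of the scaling symmetry `X₃ = q x ∂ₓ − 2(p+p₀)∂ₚ` for `f(p) = k (p+p₀)^(1+q)`. -/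
theorem westervelt_scaling_symmetry
    (k q p₀ β c : ℝ)
    (p : ℝ × ℝ → ℝ) (hp : ContDiff ℝ (⊤ : ℕ∞) p)
    (hpos : ∀ z : ℝ × ℝ, p z + p₀ > 0)
    (hsol : IsWesterveltSolution (fun s => k * (s + p₀) ^ (1 + q)) β c p)
    (lam : ℝ) (hlam : lam > 0) :
    (∀ z : ℝ × ℝ, (lam ^ (-2 : ℝ) * (p (z.1, lam ^ (-q) * z.2) + p₀) - p₀) + p₀ > 0) ∧
    IsWesterveltSolution (fun s => k * (s + p₀) ^ (1 + q)) β c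
      (fun z => lam ^ (-2 : ℝ) * (p (z.1, lam ^ (-q) * z.2) + p₀) - p₀) := by
  have ha : (0:ℝ) < lam ^ (-2:ℝ) := Real.rpow_pos_of_pos hlam _
  -- abbreviations (no `set`, keep everything explicit)
  -- positivity
  have hpos' : ∀ z : ℝ × ℝ,
      (lam ^ (-2:ℝ) * (p (z.1, lam ^ (-q) * z.2) + p₀) - p₀) + p₀ > 0 := by
    intro z
    have h1 : lam ^ (-2:ℝ) * (p (z.1, lam ^ (-q) * z.2) + p₀) > 0 :=
      mul_pos ha (hpos _)
    linarith
  refine ⟨hpos', ?_⟩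
  -- first x-derivative
  have hDx1 : ∀ z : ℝ × ℝ,
      Dx (fun z => lam ^ (-2:ℝ) * (p (z.1, lam ^ (-q) * z.2) + p₀) - p₀) z
        = (lam ^ (-2:ℝ) * lam ^ (-q)) * Dx p (z.1, lam ^ (-q) * z.2) := by
    intro z
    show deriv (fun y => lam ^ (-2:ℝ) * (p (z.1, lam ^ (-q) * y) + p₀) - p₀) z.2 = _
    rw [deriv_sub_const, deriv_const_mul_field]
    have h2 : deriv (fun y => p (z.1, lam ^ (-q) * y) + p₀) z.2
        = deriv (fun y => p (z.1, lam ^ (-q) * y)) z.2 := deriv_add_const _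
    rw [h2, deriv_comp_const_mul'' (fun y => p (z.1, y)) (lam ^ (-q)) z.2]
    simp only [Dx]
    ring
  -- second x-derivative
  have hDx2 : ∀ z : ℝ × ℝ,
      Dx (Dx (fun z => lam ^ (-2:ℝ) * (p (z.1, lam ^ (-q) * z.2) + p₀) - p₀)) z
        = (lam ^ (-2:ℝ) * lam ^ (-q) * lam ^ (-q)) * Dx (Dx p) (z.1, lam ^ (-q) * z.2) := by
    intro z
    have hfun : (fun y => Dx (fun z => lam ^ (-2:ℝ) * (p (z.1, lam ^ (-q) * z.2) + p₀) - p₀) (z.1, y))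
        = fun y => (lam ^ (-2:ℝ) * lam ^ (-q)) * Dx p (z.1, lam ^ (-q) * y) := by
      funext y; exact hDx1 (z.1, y)
    show deriv (fun y => Dx (fun z => lam ^ (-2:ℝ) * (p (z.1, lam ^ (-q) * z.2) + p₀) - p₀) (z.1, y)) z.2 = _
    rw [hfun, deriv_const_mul_field,
      deriv_comp_const_mul'' (fun y => Dx p (z.1, y)) (lam ^ (-q)) z.2]
    simp only [Dx]
    ring
  -- t-derivative of second x-derivative
  have hDtDx2 : ∀ z : ℝ × ℝ,
      Dt (Dx (Dx (fun z => lam ^ (-2:ℝ) * (p (z.1, lam ^ (-q) * z.2) + p₀) - p₀))) z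
        = (lam ^ (-2:ℝ) * lam ^ (-q) * lam ^ (-q)) * Dt (Dx (Dx p)) (z.1, lam ^ (-q) * z.2) := by
    intro z
    have hfun : (fun s => Dx (Dx (fun z => lam ^ (-2:ℝ) * (p (z.1, lam ^ (-q) * z.2) + p₀) - p₀)) (s, z.2))
        = fun s => (lam ^ (-2:ℝ) * lam ^ (-q) * lam ^ (-q)) * Dx (Dx p) (s, lam ^ (-q) * z.2) := by
      funext s; exact hDx2 (s, z.2)
    show deriv (fun s => Dx (Dx (fun z => lam ^ (-2:ℝ) * (p (z.1, lam ^ (-q) * z.2) + p₀) - p₀)) (s, z.2)) z.1 = _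
    rw [hfun, deriv_const_mul_field]
    simp only [Dt]
  -- pointwise identity for the nonlinearity
  have hF : ∀ z : ℝ × ℝ,
      k * (((lam ^ (-2:ℝ) * (p (z.1, lam ^ (-q) * z.2) + p₀) - p₀)) + p₀) ^ (1+q)
        = (lam ^ (-2:ℝ)) ^ (1+q) * (k * (p (z.1, lam ^ (-q) * z.2) + p₀) ^ (1+q)) := by
    intro z
    have h1 : (lam ^ (-2:ℝ) * (p (z.1, lam ^ (-q) * z.2) + p₀) - p₀) + p₀
        = lam ^ (-2:ℝ) * (p (z.1, lam ^ (-q) * z.2) + p₀) := by ring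
    rw [h1, Real.mul_rpow ha.le (hpos _).le]
    ring
  -- first t-derivative of the nonlinearity
  have hDt1 : ∀ z : ℝ × ℝ,
      Dt (fun w => k * (((lam ^ (-2:ℝ) * (p (w.1, lam ^ (-q) * w.2) + p₀) - p₀)) + p₀) ^ (1+q)) z
        = (lam ^ (-2:ℝ)) ^ (1+q) *
          Dt (fun w => k * (p w + p₀) ^ (1+q)) (z.1, lam ^ (-q) * z.2) := by
    intro z
    have hfun : (fun s => k * (((lam ^ (-2:ℝ) * (p ((s, z.2).1, lam ^ (-q) * (s, z.2).2) + p₀) - p₀)) + p₀) ^ (1+q))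
        = fun s => (lam ^ (-2:ℝ)) ^ (1+q) * (k * (p (s, lam ^ (-q) * z.2) + p₀) ^ (1+q)) := by
      funext s; exact hF (s, z.2)
    show deriv (fun s => k * (((lam ^ (-2:ℝ) * (p ((s, z.2).1, lam ^ (-q) * (s, z.2).2) + p₀) - p₀)) + p₀) ^ (1+q)) z.1 = _
    rw [hfun, deriv_const_mul_field]
    simp only [Dt]
  -- second t-derivative of the nonlinearity
  have hDt2 : ∀ z : ℝ × ℝ,
      Dt (Dt (fun w => k * (((lam ^ (-2:ℝ) * (p (w.1, lam ^ (-q) * w.2) + p₀) - p₀)) + p₀) ^ (1+q))) z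
        = (lam ^ (-2:ℝ)) ^ (1+q) *
          Dt (Dt (fun w => k * (p w + p₀) ^ (1+q))) (z.1, lam ^ (-q) * z.2) := by
    intro z
    have hfun : (fun s => Dt (fun w => k * (((lam ^ (-2:ℝ) * (p (w.1, lam ^ (-q) * w.2) + p₀) - p₀)) + p₀) ^ (1+q)) (s, z.2))
        = fun s => (lam ^ (-2:ℝ)) ^ (1+q) *
            Dt (fun w => k * (p w + p₀) ^ (1+q)) (s, lam ^ (-q) * z.2) := by
      funext s; exact hDt1 (s, z.2)
    show deriv (fun s => Dt (fun w => k * (((lam ^ (-2:ℝ) * (p (w.1, lam ^ (-q) * w.2) + p₀) - p₀)) + p₀) ^ (1+q)) (s, z.2)) z.1 = _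
    rw [hfun, deriv_const_mul_field]
    simp only [Dt]
  -- exponent algebra
  have hA : (lam ^ (-2:ℝ)) ^ (1+q) = lam ^ (-2:ℝ) * lam ^ (-q) * lam ^ (-q) := by
    have e1 : lam ^ ((-2:ℝ)*(1+q)) = (lam ^ (-2:ℝ)) ^ (1+q) := Real.rpow_mul hlam.le _ _
    have e2 : lam ^ ((-2:ℝ)*(1+q)) = lam ^ (-2:ℝ) * lam ^ (-q) * lam ^ (-q) := by
      rw [show (-2:ℝ)*(1+q) = (-2) + (-q + -q) by ring, Real.rpow_add hlam, Real.rpow_add hlam]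
      ring
    rw [← e1, e2]
  -- conclude
  intro z
  have hs := hsol (z.1, lam ^ (-q) * z.2)
  have h1 := hDt2 z
  have h2 := hDtDx2 z
  have h3 := hDx2 z
  rw [hA] at h1
  calc Dt (Dt (fun w => k * (((lam ^ (-2:ℝ) * (p (w.1, lam ^ (-q) * w.2) + p₀) - p₀)) + p₀) ^ (1+q))) z
        - β * Dt (Dx (Dx (fun z => lam ^ (-2:ℝ) * (p (z.1, lam ^ (-q) * z.2) + p₀) - p₀))) z
      = (lam ^ (-2:ℝ) * lam ^ (-q) * lam ^ (-q)) *
          (Dt (Dt (fun w => k * (p w + p₀) ^ (1+q))) (z.1, lam ^ (-q) * z.2)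
            - β * Dt (Dx (Dx p)) (z.1, lam ^ (-q) * z.2)) := by
        rw [h1, h2]; ring
    _ = (lam ^ (-2:ℝ) * lam ^ (-q) * lam ^ (-q)) *
          (c ^ 2 * Dx (Dx p) (z.1, lam ^ (-q) * z.2)) := by rw [hs]
    _ = c ^ 2 * Dx (Dx (fun z => lam ^ (-2:ℝ) * (p (z.1, lam ^ (-q) * z.2) + p₀) - p₀)) z := by
        rw [h3]; ring
end

section
/- Let k, p₀, β, c be real constants and let f(p) = k·(p + p₀)⁻³. Let p : ℝ × ℝ → ℝ be smooth with p(t,x) + p₀ ≠ 0 everywhere and suppose p solves ∂²ₜ(f(p)) − β ∂ₜ∂²ₓp = c² ∂²ₓp at every point. Then for every real ε, the transformed function p̃(t,y) = (1 + ε y)·(p(t, y/(1 + ε y)) + p₀) − p₀ satisfies p̃(t,y) + p₀ ≠ 0 and solves the same equation at every point (t,y) with 1 + ε y > 0. (This is the finite form of the non-rigid scaling symmetry X₄ = x² ∂ₓ + x(p + p₀)∂ₚ.) -/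
noncomputable def pd1 (F : ℝ × ℝ → ℝ) : ℝ × ℝ → ℝ := fun z => fderiv ℝ F z (1, 0)
noncomputable def pd2 (F : ℝ × ℝ → ℝ) : ℝ × ℝ → ℝ := fun z => fderiv ℝ F z (0, 1)

lemma hasDerivAt_sliceX (F : ℝ × ℝ → ℝ) (t x : ℝ) (hF : DifferentiableAt ℝ F (t, x)) :
    HasDerivAt (fun y => F (t, y)) (pd2 F (t, x)) x := by
  have h1 : HasDerivAt (fun y : ℝ => ((t, y) : ℝ × ℝ)) ((0 : ℝ), (1 : ℝ)) x :=
    (hasDerivAt_const x t).prodMk (hasDerivAt_id x)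
  exact hF.hasFDerivAt.comp_hasDerivAt x h1

lemma hasDerivAt_sliceT (F : ℝ × ℝ → ℝ) (t x : ℝ) (hF : DifferentiableAt ℝ F (t, x)) :
    HasDerivAt (fun s => F (s, x)) (pd1 F (t, x)) t := by
  have h1 : HasDerivAt (fun s : ℝ => ((s, x) : ℝ × ℝ)) ((1 : ℝ), (0 : ℝ)) t :=
    (hasDerivAt_id t).prodMk (hasDerivAt_const t x)
  exact hF.hasFDerivAt.comp_hasDerivAt t h1

lemma pd1_contDiff {F : ℝ × ℝ → ℝ} (hF : ContDiff ℝ (⊤ : ℕ∞) F) : ContDiff ℝ (⊤ : ℕ∞) (pd1 F) :=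
  (hF.fderiv_right (by simp)).clm_apply contDiff_const

lemma pd2_contDiff {F : ℝ × ℝ → ℝ} (hF : ContDiff ℝ (⊤ : ℕ∞) F) : ContDiff ℝ (⊤ : ℕ∞) (pd2 F) :=
  (hF.fderiv_right (by simp)).clm_apply contDiff_const

/-- Finite form of the non-rigid scaling symmetry `X₄ = x² ∂ₓ + x(p+p₀)∂ₚ`
for `f(p) = k/(p+p₀)³`. -/
theorem westervelt_projective_symmetry
    (k p₀ β c : ℝ)
    (p : ℝ × ℝ → ℝ) (hp : ContDiff ℝ (⊤ : ℕ∞) p)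
    (hne : ∀ z : ℝ × ℝ, p z + p₀ ≠ 0)
    (hsol : ∀ z : ℝ × ℝ,
      Dt (Dt (fun w => k / (p w + p₀) ^ 3)) z - β * Dt (Dx (Dx p)) z
        = c ^ 2 * Dx (Dx p) z)
    (ε : ℝ) :
    ∀ t y : ℝ, 1 + ε * y > 0 →
      ((fun z : ℝ × ℝ => (1 + ε * z.2) * (p (z.1, z.2 / (1 + ε * z.2)) + p₀) - p₀) (t, y)
          + p₀ ≠ 0) ∧
      (Dt (Dt (fun w =>
            k / ((fun z : ℝ × ℝ =>
              (1 + ε * z.2) * (p (z.1, z.2 / (1 + ε * z.2)) + p₀) - p₀) w + p₀) ^ 3)) (t, y)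
        - β * Dt (Dx (Dx (fun z : ℝ × ℝ =>
            (1 + ε * z.2) * (p (z.1, z.2 / (1 + ε * z.2)) + p₀) - p₀))) (t, y)
        = c ^ 2 * Dx (Dx (fun z : ℝ × ℝ =>
            (1 + ε * z.2) * (p (z.1, z.2 / (1 + ε * z.2)) + p₀) - p₀)) (t, y)) := by
  intro t y hy
  have hLy : (1 : ℝ) + ε * y ≠ 0 := ne_of_gt hy
  set u : ℝ × ℝ → ℝ := fun z : ℝ × ℝ =>
    (1 + ε * z.2) * (p (z.1, z.2 / (1 + ε * z.2)) + p₀) - p₀ with hu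
  have hpd : Differentiable ℝ p := hp.differentiable (by simp)
  have hpx : ContDiff ℝ (⊤ : ℕ∞) (pd2 p) := pd2_contDiff hp
  have hpxx : ContDiff ℝ (⊤ : ℕ∞) (pd2 (pd2 p)) := pd2_contDiff hpx
  set G : ℝ × ℝ → ℝ := fun w => k / (p w + p₀) ^ 3 with hGdef
  have hGc : ContDiff ℝ (⊤ : ℕ∞) G :=
    contDiff_const.div ((hp.add contDiff_const).pow 3) (fun z => pow_ne_zero _ (hne z))
  have hGt : ContDiff ℝ (⊤ : ℕ∞) (pd1 G) := pd1_contDiff hGc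
  have hL' : ∀ y' : ℝ, HasDerivAt (fun w : ℝ => 1 + ε * w) ε y' := fun y' => by
    simpa using ((hasDerivAt_id y').const_mul ε).const_add 1
  have hg' : ∀ y' : ℝ, 1 + ε * y' ≠ 0 →
      HasDerivAt (fun w : ℝ => w / (1 + ε * w)) (1 / (1 + ε * y') ^ 2) y' := by
    intro y' h
    have h2 := (hasDerivAt_id y').div (hL' y') h
    refine h2.congr_deriv ?_
    show (1 * (1 + ε * y') - y' * ε) / (1 + ε * y') ^ 2 = _
    field_simp
    ring
  -- first x-derivative of u
  have hA : ∀ t' y' : ℝ, 1 + ε * y' ≠ 0 →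
      Dx u (t', y') = ε * (p (t', y' / (1 + ε * y')) + p₀)
        + pd2 p (t', y' / (1 + ε * y')) / (1 + ε * y') := by
    intro t' y' h
    have hslice : HasDerivAt (fun x => p (t', x))
        (pd2 p (t', y' / (1 + ε * y'))) (y' / (1 + ε * y')) :=
      hasDerivAt_sliceX p _ _ (hpd _)
    have hcomp : HasDerivAt (fun w : ℝ => p (t', w / (1 + ε * w)))
        (pd2 p (t', y' / (1 + ε * y')) * (1 / (1 + ε * y') ^ 2)) y' :=
      by have := hslice.comp y' (hg' y' h); exact this
    have hprod := ((hL' y').mul (hcomp.add_const p₀)).sub_const p₀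
    have hder := hprod.deriv
    show deriv (fun w => u (t', w)) y' = _
    simp only [hu]
    refine hder.trans ?_
    field_simp
  -- second x-derivative of u
  have hB : ∀ t' y' : ℝ, 1 + ε * y' ≠ 0 →
      Dx (Dx u) (t', y')
        = pd2 (pd2 p) (t', y' / (1 + ε * y')) / (1 + ε * y') ^ 3 := by
    intro t' y' h
    have hev : (fun w => Dx u (t', w)) =ᶠ[nhds y'] (fun w =>
        ε * (p (t', w / (1 + ε * w)) + p₀) + pd2 p (t', w / (1 + ε * w)) / (1 + ε * w)) := by
      have hcont : ContinuousAt (fun w : ℝ => 1 + ε * w) y' := by fun_prop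
      filter_upwards [hcont.eventually_ne h] with w hw using hA t' w hw
    have heq : Dx (Dx u) (t', y') = deriv (fun w =>
        ε * (p (t', w / (1 + ε * w)) + p₀)
          + pd2 p (t', w / (1 + ε * w)) / (1 + ε * w)) y' := hev.deriv_eq
    rw [heq]
    have hslice : HasDerivAt (fun x => p (t', x))
        (pd2 p (t', y' / (1 + ε * y'))) (y' / (1 + ε * y')) :=
      hasDerivAt_sliceX p _ _ (hpd _)
    have hcomp : HasDerivAt (fun w : ℝ => p (t', w / (1 + ε * w)))
        (pd2 p (t', y' / (1 + ε * y')) * (1 / (1 + ε * y') ^ 2)) y' :=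
      by have := hslice.comp y' (hg' y' h); exact this
    have h1 : HasDerivAt (fun w : ℝ => ε * (p (t', w / (1 + ε * w)) + p₀))
        (ε * (pd2 p (t', y' / (1 + ε * y')) * (1 / (1 + ε * y') ^ 2))) y' :=
      (hcomp.add_const p₀).const_mul ε
    have h2 : HasDerivAt (fun w : ℝ => pd2 p (t', w / (1 + ε * w)))
        (pd2 (pd2 p) (t', y' / (1 + ε * y')) * (1 / (1 + ε * y') ^ 2)) y' :=
      (hasDerivAt_sliceX (pd2 p) t' _ ((hpx.differentiable (by simp)) _)).comp y' (hg' y' h)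
    have h3 := h2.div (hL' y') h
    have h4 := (h1.add h3).deriv
    refine h4.trans ?_
    field_simp
    ring
  -- t-derivative of the second x-derivative
  have hC : Dt (Dx (Dx u)) (t, y)
      = pd1 (pd2 (pd2 p)) (t, y / (1 + ε * y)) / (1 + ε * y) ^ 3 := by
    have hfun : (fun s => Dx (Dx u) (s, y))
        = fun s => pd2 (pd2 p) (s, y / (1 + ε * y)) / (1 + ε * y) ^ 3 :=
      funext fun s => hB s y hLy
    show deriv (fun s => Dx (Dx u) (s, y)) t = _
    rw [hfun]
    have h4 : HasDerivAt (fun s => pd2 (pd2 p) (s, y / (1 + ε * y)))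
        (pd1 (pd2 (pd2 p)) (t, y / (1 + ε * y))) t :=
      hasDerivAt_sliceT _ _ _ ((hpxx.differentiable (by simp)) _)
    exact (h4.div_const _).deriv
  -- the nonlinear term
  have hfeq : (fun w : ℝ × ℝ => k / (u w + p₀) ^ 3)
      = fun w : ℝ × ℝ => ((1 + ε * w.2) ^ 3)⁻¹ * G (w.1, w.2 / (1 + ε * w.2)) := by
    funext w
    simp only [hu, hGdef]
    rw [sub_add_cancel, mul_pow, div_eq_mul_inv, div_eq_mul_inv, mul_inv]
    ring
  have hD : Dt (Dt (fun w => k / (u w + p₀) ^ 3)) (t, y)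
      = ((1 + ε * y) ^ 3)⁻¹ * pd1 (pd1 G) (t, y / (1 + ε * y)) := by
    have hinner : ∀ s : ℝ, Dt (fun w => k / (u w + p₀) ^ 3) (s, y)
        = ((1 + ε * y) ^ 3)⁻¹ * pd1 G (s, y / (1 + ε * y)) := by
      intro s
      show deriv (fun s' => k / (u (s', y) + p₀) ^ 3) s = _
      have h5 : (fun s' => k / (u (s', y) + p₀) ^ 3)
          = fun s' => ((1 + ε * y) ^ 3)⁻¹ * G (s', y / (1 + ε * y)) :=
        funext fun s' => congrFun hfeq (s', y)
      rw [h5]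
      exact ((hasDerivAt_sliceT G s _ ((hGc.differentiable (by simp)) _)).const_mul _).deriv
    show deriv (fun s => Dt (fun w => k / (u w + p₀) ^ 3) (s, y)) t = _
    rw [funext hinner]
    exact ((hasDerivAt_sliceT (pd1 G) t _ ((hGt.differentiable (by simp)) _)).const_mul _).deriv
  -- identify the original equation's terms
  have hDxp : Dx p = pd2 p := funext fun z => (hasDerivAt_sliceX p z.1 z.2 (hpd _)).deriv
  have hDxxp : Dx (Dx p) = pd2 (pd2 p) := by
    rw [hDxp]
    exact funext fun z => (hasDerivAt_sliceX _ z.1 z.2 ((hpx.differentiable (by simp)) _)).deriv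
  have hDtDxx : Dt (Dx (Dx p)) = pd1 (pd2 (pd2 p)) := by
    rw [hDxxp]
    exact funext fun z => (hasDerivAt_sliceT _ z.1 z.2 ((hpxx.differentiable (by simp)) _)).deriv
  have hDtG : Dt (Dt G) = pd1 (pd1 G) := by
    have h1 : Dt G = pd1 G :=
      funext fun z => (hasDerivAt_sliceT _ z.1 z.2 ((hGc.differentiable (by simp)) _)).deriv
    rw [h1]
    exact funext fun z => (hasDerivAt_sliceT _ z.1 z.2 ((hGt.differentiable (by simp)) _)).deriv
  constructor
  · show u (t, y) + p₀ ≠ 0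
    have h6 := mul_ne_zero hLy (hne (t, y / (1 + ε * y)))
    simpa [hu] using h6
  · have hs := hsol (t, y / (1 + ε * y))
    rw [hDtG, hDtDxx, hDxxp] at hs
    rw [hD, hC, hB t y hLy]
    have hL3 : (1 + ε * y) ^ 3 ≠ 0 := pow_ne_zero _ hLy
    field_simp
    linear_combination hs
end

section
/- For every smooth function p : ℝ × ℝ → ℝ and smooth f : ℝ → ℝ and real constants β, c, the multiplier identity for Q₄ = t·x holds as an identity at every point (t,x): t·x·(∂²ₜ(f(p)) − β ∂ₜ∂²ₓp − c² ∂²ₓp) = ∂ₜT₄ + ∂ₓΦ₄, where T₄(t,x) = −x·(f(p(t,x)) − t ∂ₜ(f(p(t,x)))) and Φ₄(t,x) = c² t·(p(t,x) − x ∂ₓp(t,x)) + β t·(∂ₜp(t,x) − x ∂ₜ∂ₓp(t,x)). -/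
private lemma Dt_eq_fderiv (H : ℝ × ℝ → ℝ) (hH : Differentiable ℝ H) (z : ℝ × ℝ) :
    Dt H z = fderiv ℝ H z ((1 : ℝ), (0 : ℝ)) := by
  obtain ⟨a, b⟩ := z
  have hline : HasDerivAt (fun s : ℝ => (s, b)) ((1 : ℝ), (0 : ℝ)) a :=
    HasDerivAt.prodMk (hasDerivAt_id a) (hasDerivAt_const a b)
  have h := (hH (a, b)).hasFDerivAt.comp_hasDerivAt a hline
  exact h.deriv

private lemma Dx_eq_fderiv (H : ℝ × ℝ → ℝ) (hH : Differentiable ℝ H) (z : ℝ × ℝ) :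
    Dx H z = fderiv ℝ H z ((0 : ℝ), (1 : ℝ)) := by
  obtain ⟨a, b⟩ := z
  have hline : HasDerivAt (fun y : ℝ => (a, y)) ((0 : ℝ), (1 : ℝ)) b :=
    HasDerivAt.prodMk (hasDerivAt_const b a) (hasDerivAt_id b)
  have h := (hH (a, b)).hasFDerivAt.comp_hasDerivAt b hline
  exact h.deriv

private lemma hasDerivAt_sec_t (H : ℝ × ℝ → ℝ) (hH : Differentiable ℝ H) (z : ℝ × ℝ) :
    HasDerivAt (fun s => H (s, z.2)) (Dt H z) z.1 := by
  obtain ⟨a, b⟩ := z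
  have hline : HasDerivAt (fun s : ℝ => (s, b)) ((1 : ℝ), (0 : ℝ)) a :=
    HasDerivAt.prodMk (hasDerivAt_id a) (hasDerivAt_const a b)
  have h := (hH (a, b)).hasFDerivAt.comp_hasDerivAt a hline
  rw [Dt_eq_fderiv H hH]
  exact h

private lemma hasDerivAt_sec_x (H : ℝ × ℝ → ℝ) (hH : Differentiable ℝ H) (z : ℝ × ℝ) :
    HasDerivAt (fun y => H (z.1, y)) (Dx H z) z.2 := by
  obtain ⟨a, b⟩ := z
  have hline : HasDerivAt (fun y : ℝ => (a, y)) ((0 : ℝ), (1 : ℝ)) b :=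
    HasDerivAt.prodMk (hasDerivAt_const b a) (hasDerivAt_id b)
  have h := (hH (a, b)).hasFDerivAt.comp_hasDerivAt b hline
  rw [Dx_eq_fderiv H hH]
  exact h

private lemma Dt_contDiff (H : ℝ × ℝ → ℝ) (hH : ContDiff ℝ (⊤ : ℕ∞) H) : ContDiff ℝ (⊤ : ℕ∞) (Dt H) := by
  have : Dt H = fun w => fderiv ℝ H w ((1 : ℝ), (0 : ℝ)) :=
    funext fun w => Dt_eq_fderiv H (hH.differentiable (by simp)) w
  rw [this]
  exact (hH.fderiv_right (by simp)).clm_apply contDiff_const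

private lemma Dx_contDiff (H : ℝ × ℝ → ℝ) (hH : ContDiff ℝ (⊤ : ℕ∞) H) : ContDiff ℝ (⊤ : ℕ∞) (Dx H) := by
  have : Dx H = fun w => fderiv ℝ H w ((0 : ℝ), (1 : ℝ)) :=
    funext fun w => Dx_eq_fderiv H (hH.differentiable (by simp)) w
  rw [this]
  exact (hH.fderiv_right (by simp)).clm_apply contDiff_const

private lemma Dx_Dt_comm (H : ℝ × ℝ → ℝ) (hH : ContDiff ℝ (⊤ : ℕ∞) H) (z : ℝ × ℝ) :
    Dx (Dt H) z = Dt (Dx H) z := by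
  have hd : Differentiable ℝ H := hH.differentiable (by simp)
  have hfd : ContDiff ℝ (⊤ : ℕ∞) (fderiv ℝ H) := hH.fderiv_right (by simp)
  have hfd' : Differentiable ℝ (fderiv ℝ H) := hfd.differentiable (by simp)
  have h2 : HasFDerivAt (fderiv ℝ H) (fderiv ℝ (fderiv ℝ H) z) z := (hfd' z).hasFDerivAt
  have hsymm := second_derivative_symmetric (f' := fderiv ℝ H)
    (fun y => (hd y).hasFDerivAt) h2
  -- rewrite Dt/Dx in terms of fderiv
  have hA : ∀ (v : ℝ × ℝ) (w : ℝ × ℝ),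
      fderiv ℝ (fun u => fderiv ℝ H u v) z w = fderiv ℝ (fderiv ℝ H) z w v := by
    intro v w
    have h3 : HasFDerivAt (fun u => fderiv ℝ H u v)
        (((ContinuousLinearMap.apply ℝ ℝ v)).comp (fderiv ℝ (fderiv ℝ H) z)) z :=
      ((ContinuousLinearMap.apply ℝ ℝ v).hasFDerivAt.comp z h2)
    rw [h3.fderiv]
    rfl
  have e1 : Dt H = fun w => fderiv ℝ H w ((1 : ℝ), (0 : ℝ)) :=
    funext fun w => Dt_eq_fderiv H hd w
  have e2 : Dx H = fun w => fderiv ℝ H w ((0 : ℝ), (1 : ℝ)) :=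
    funext fun w => Dx_eq_fderiv H hd w
  have hDtH : Differentiable ℝ (Dt H) := (Dt_contDiff H hH).differentiable (by simp)
  have hDxH : Differentiable ℝ (Dx H) := (Dx_contDiff H hH).differentiable (by simp)
  rw [Dx_eq_fderiv _ hDtH, Dt_eq_fderiv _ hDxH]
  rw [show fderiv ℝ (Dt H) z = fderiv ℝ (fun w => fderiv ℝ H w ((1:ℝ),(0:ℝ))) z by rw [e1],
      show fderiv ℝ (Dx H) z = fderiv ℝ (fun w => fderiv ℝ H w ((0:ℝ),(1:ℝ))) z by rw [e2]]
  rw [hA, hA]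
  exact hsymm _ _

/-- Multiplier identity for `Q₄ = t·x`: the product of `t·x` with the Westervelt equation
is the total divergence `∂ₜT₄ + ∂ₓΦ₄` with `T₄ = −x (f(p) − t (f(p))ₜ)` and
`Φ₄ = c² t (p − x pₓ) + β t (pₜ − x pₜₓ)`. -/
theorem westervelt_multiplier_tx
    (f : ℝ → ℝ) (hf : ContDiff ℝ (⊤ : ℕ∞) f) (β c : ℝ)
    (p : ℝ × ℝ → ℝ) (hp : ContDiff ℝ (⊤ : ℕ∞) p) :
    ∀ z : ℝ × ℝ,
      z.1 * z.2 * (Dt (Dt (fun w => f (p w))) z - β * Dt (Dx (Dx p)) z - c ^ 2 * Dx (Dx p) z)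
        = Dt (fun w => -w.2 * (f (p w) - w.1 * Dt (fun w' => f (p w')) w)) z
          + Dx (fun w => c ^ 2 * w.1 * (p w - w.2 * Dx p w)
              + β * w.1 * (Dt p w - w.2 * Dt (Dx p) w)) z := by
  intro z
  obtain ⟨t, x⟩ := z
  set g : ℝ × ℝ → ℝ := fun w => f (p w) with hg
  have hgc : ContDiff ℝ (⊤ : ℕ∞) g := hf.comp hp
  have hDtg : ContDiff ℝ (⊤ : ℕ∞) (Dt g) := Dt_contDiff g hgc
  have hDtp : ContDiff ℝ (⊤ : ℕ∞) (Dt p) := Dt_contDiff p hp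
  have hDxp : ContDiff ℝ (⊤ : ℕ∞) (Dx p) := Dx_contDiff p hp
  have hDtDxp : ContDiff ℝ (⊤ : ℕ∞) (Dt (Dx p)) := Dt_contDiff _ hDxp
  -- time derivative of T₄
  have h1 : HasDerivAt (fun s => g (s, x)) (Dt g (t, x)) t :=
    hasDerivAt_sec_t g (hgc.differentiable (by simp)) (t, x)
  have h2 : HasDerivAt (fun s => Dt g (s, x)) (Dt (Dt g) (t, x)) t :=
    hasDerivAt_sec_t _ (hDtg.differentiable (by simp)) (t, x)
  have hT : HasDerivAt (fun s => -x * (g (s, x) - s * Dt g (s, x)))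
      (-x * (Dt g (t, x) - (1 * Dt g (t, x) + t * Dt (Dt g) (t, x)))) t :=
    (h1.sub ((hasDerivAt_id t).mul h2)).const_mul (-x)
  have e1 : Dt (fun w => -w.2 * (g w - w.1 * Dt g w)) (t, x)
      = -x * (Dt g (t, x) - (1 * Dt g (t, x) + t * Dt (Dt g) (t, x))) := hT.deriv
  -- space derivative of Φ₄
  have b1 : HasDerivAt (fun y => p (t, y)) (Dx p (t, x)) x :=
    hasDerivAt_sec_x p (hp.differentiable (by simp)) (t, x)
  have b2 : HasDerivAt (fun y => Dx p (t, y)) (Dx (Dx p) (t, x)) x :=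
    hasDerivAt_sec_x _ (hDxp.differentiable (by simp)) (t, x)
  have b3 : HasDerivAt (fun y => Dt p (t, y)) (Dx (Dt p) (t, x)) x :=
    hasDerivAt_sec_x _ (hDtp.differentiable (by simp)) (t, x)
  have b4 : HasDerivAt (fun y => Dt (Dx p) (t, y)) (Dx (Dt (Dx p)) (t, x)) x :=
    hasDerivAt_sec_x _ (hDtDxp.differentiable (by simp)) (t, x)
  have hΦ : HasDerivAt (fun y => c ^ 2 * t * (p (t, y) - y * Dx p (t, y))
        + β * t * (Dt p (t, y) - y * Dt (Dx p) (t, y)))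
      (c ^ 2 * t * (Dx p (t, x) - (1 * Dx p (t, x) + x * Dx (Dx p) (t, x)))
        + β * t * (Dx (Dt p) (t, x) - (1 * Dt (Dx p) (t, x) + x * Dx (Dt (Dx p)) (t, x)))) x :=
    ((b1.sub ((hasDerivAt_id x).mul b2)).const_mul (c ^ 2 * t)).add
      ((b3.sub ((hasDerivAt_id x).mul b4)).const_mul (β * t))
  have e2 : Dx (fun w => c ^ 2 * w.1 * (p w - w.2 * Dx p w)
        + β * w.1 * (Dt p w - w.2 * Dt (Dx p) w)) (t, x)
      = c ^ 2 * t * (Dx p (t, x) - (1 * Dx p (t, x) + x * Dx (Dx p) (t, x)))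
        + β * t * (Dx (Dt p) (t, x) - (1 * Dt (Dx p) (t, x) + x * Dx (Dt (Dx p)) (t, x))) :=
    hΦ.deriv
  rw [e1, e2, Dx_Dt_comm p hp (t, x), Dx_Dt_comm (Dx p) hDxp (t, x)]
  ring
end

section
/- Let f : ℝ → ℝ be smooth and β, c, μ real constants. If p, u : ℝ × ℝ → ℝ are smooth and satisfy the first-layer potential system ∂ₓu = f′(p)·∂ₜp − μ ∂²ₓp and ∂ₜu = c² ∂ₓp + (β − μ) ∂ₜ∂ₓp at every point, then p is a solution of the generalized Westervelt equation ∂²ₜ(f(p)) − β ∂ₜ∂²ₓp = c² ∂²ₓp at every point. -/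
/-- `(p, u)` solves the first-layer potential system
`uₓ = f'(p) pₜ − μ pₓₓ`, `uₜ = c² pₓ + (β − μ) pₜₓ` everywhere. -/
def FirstLayerPotentialSystem (f : ℝ → ℝ) (β c μ : ℝ) (p u : ℝ × ℝ → ℝ) : Prop :=
  ∀ z : ℝ × ℝ,
    Dx u z = deriv f (p z) * Dt p z - μ * Dx (Dx p) z ∧
    Dt u z = c ^ 2 * Dx p z + (β - μ) * Dt (Dx p) z

section aux

variable {F G : ℝ × ℝ → ℝ}

lemma hasDerivAt_sectT (hF : ContDiff ℝ (⊤ : ℕ∞) F) (z : ℝ × ℝ) :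
    HasDerivAt (fun s => F (s, z.2)) (fderiv ℝ F z ((1 : ℝ), (0 : ℝ))) z.1 := by
  have h1 : HasDerivAt (fun s : ℝ => (s, z.2)) ((1 : ℝ), (0 : ℝ)) z.1 :=
    (hasDerivAt_id z.1).prodMk (hasDerivAt_const z.1 z.2)
  have h2 := ((hF.differentiable (by simp)) (z.1, z.2)).hasFDerivAt.comp_hasDerivAt z.1 h1
  simpa [Function.comp_def] using h2

lemma hasDerivAt_sectX (hF : ContDiff ℝ (⊤ : ℕ∞) F) (z : ℝ × ℝ) :
    HasDerivAt (fun y => F (z.1, y)) (fderiv ℝ F z ((0 : ℝ), (1 : ℝ))) z.2 := by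
  have h1 : HasDerivAt (fun y : ℝ => (z.1, y)) ((0 : ℝ), (1 : ℝ)) z.2 :=
    (hasDerivAt_const z.2 z.1).prodMk (hasDerivAt_id z.2)
  have h2 := ((hF.differentiable (by simp)) (z.1, z.2)).hasFDerivAt.comp_hasDerivAt z.2 h1
  simpa [Function.comp_def] using h2

lemma Dt_eq (hF : ContDiff ℝ (⊤ : ℕ∞) F) (z : ℝ × ℝ) :
    Dt F z = fderiv ℝ F z ((1 : ℝ), (0 : ℝ)) :=
  (hasDerivAt_sectT hF z).deriv

lemma Dx_eq (hF : ContDiff ℝ (⊤ : ℕ∞) F) (z : ℝ × ℝ) :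
    Dx F z = fderiv ℝ F z ((0 : ℝ), (1 : ℝ)) :=
  (hasDerivAt_sectX hF z).deriv

lemma hasDerivAt_Dt (hF : ContDiff ℝ (⊤ : ℕ∞) F) (z : ℝ × ℝ) :
    HasDerivAt (fun s => F (s, z.2)) (Dt F z) z.1 := by
  rw [Dt_eq hF]; exact hasDerivAt_sectT hF z

lemma hasDerivAt_Dx (hF : ContDiff ℝ (⊤ : ℕ∞) F) (z : ℝ × ℝ) :
    HasDerivAt (fun y => F (z.1, y)) (Dx F z) z.2 := by
  rw [Dx_eq hF]; exact hasDerivAt_sectX hF z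

lemma contDiff_Dt (hF : ContDiff ℝ (⊤ : ℕ∞) F) : ContDiff ℝ (⊤ : ℕ∞) (Dt F) := by
  have : Dt F = fun z => fderiv ℝ F z ((1 : ℝ), (0 : ℝ)) := funext fun z => Dt_eq hF z
  rw [this]
  exact (hF.fderiv_right (by simp)).clm_apply contDiff_const

lemma contDiff_Dx (hF : ContDiff ℝ (⊤ : ℕ∞) F) : ContDiff ℝ (⊤ : ℕ∞) (Dx F) := by
  have : Dx F = fun z => fderiv ℝ F z ((0 : ℝ), (1 : ℝ)) := funext fun z => Dx_eq hF z
  rw [this]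
  exact (hF.fderiv_right (by simp)).clm_apply contDiff_const

lemma Dt_Dx_comm (hF : ContDiff ℝ (⊤ : ℕ∞) F) (z : ℝ × ℝ) :
    Dt (Dx F) z = Dx (Dt F) z := by
  have hd : Differentiable ℝ F := hF.differentiable (by simp)
  have hf' : ContDiff ℝ (⊤ : ℕ∞) (fderiv ℝ F) := hF.fderiv_right (by simp)
  have hf'' : HasFDerivAt (fderiv ℝ F) (fderiv ℝ (fderiv ℝ F) z) z :=
    ((hf'.differentiable (by simp)) z).hasFDerivAt
  have hsymm := second_derivative_symmetric (fun y => (hd y).hasFDerivAt) hf''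
      ((1 : ℝ), (0 : ℝ)) ((0 : ℝ), (1 : ℝ))
  have hDx : HasFDerivAt (Dx F)
      ((fderiv ℝ F z).comp (0 : (ℝ × ℝ) →L[ℝ] (ℝ × ℝ)) +
        (fderiv ℝ (fderiv ℝ F) z).flip ((0 : ℝ), (1 : ℝ))) z := by
    have : Dx F = fun w => fderiv ℝ F w ((0 : ℝ), (1 : ℝ)) := funext fun w => Dx_eq hF w
    rw [this]
    exact hf''.clm_apply (hasFDerivAt_const _ _)
  have hDt : HasFDerivAt (Dt F)
      ((fderiv ℝ F z).comp (0 : (ℝ × ℝ) →L[ℝ] (ℝ × ℝ)) +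
        (fderiv ℝ (fderiv ℝ F) z).flip ((1 : ℝ), (0 : ℝ))) z := by
    have : Dt F = fun w => fderiv ℝ F w ((1 : ℝ), (0 : ℝ)) := funext fun w => Dt_eq hF w
    rw [this]
    exact hf''.clm_apply (hasFDerivAt_const _ _)
  rw [Dt_eq (contDiff_Dx hF) z, Dx_eq (contDiff_Dt hF) z, hDx.fderiv, hDt.fderiv]
  simpa using hsymm

end aux

/-- Any solution of the first-layer potential system projects to a solution of the
generalized Westervelt equation `(f(p))ₜₜ − β pₓₓₜ = c² pₓₓ`. -/
theorem firstLayerPotential_implies_westervelt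
    (f : ℝ → ℝ) (hf : ContDiff ℝ (⊤ : ℕ∞) f) (β c μ : ℝ)
    (p u : ℝ × ℝ → ℝ) (hp : ContDiff ℝ (⊤ : ℕ∞) p) (hu : ContDiff ℝ (⊤ : ℕ∞) u)
    (hsys : FirstLayerPotentialSystem f β c μ p u) :
    ∀ z : ℝ × ℝ,
      Dt (Dt (fun w => f (p w))) z - β * Dt (Dx (Dx p)) z = c ^ 2 * Dx (Dx p) z := by
  intro z
  set g : ℝ × ℝ → ℝ := fun w => f (p w) with hg_def
  have hg : ContDiff ℝ (⊤ : ℕ∞) g := hf.comp hp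
  -- chain rule: Dt g = f'(p) * Dt p
  have hchain : ∀ w : ℝ × ℝ, Dt g w = deriv f (p w) * Dt p w := by
    intro w
    have h1 : HasDerivAt (fun s => p (s, w.2)) (Dt p w) w.1 := hasDerivAt_Dt hp w
    have h2 : HasDerivAt f (deriv f (p (w.1, w.2))) (p (w.1, w.2)) :=
      ((hf.differentiable (by simp)) _).hasDerivAt
    have := h2.comp w.1 h1
    simpa [hg_def, Dt, Function.comp_def] using this.deriv
  -- rewrite system equation 1 as functions
  have hA : Dx u = fun w => Dt g w - μ * Dx (Dx p) w := by
    funext w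
    rw [(hsys w).1, hchain w]
  have hB : Dt u = fun w => c ^ 2 * Dx p w + (β - μ) * Dt (Dx p) w := by
    funext w
    rw [(hsys w).2]
  -- differentiate eq 1 in t
  have hDtDxu : Dt (Dx u) z = Dt (Dt g) z - μ * Dt (Dx (Dx p)) z := by
    rw [hA, Dt]
    have h1 := hasDerivAt_Dt (contDiff_Dt hg) z
    have h2 := (hasDerivAt_Dt (contDiff_Dx (contDiff_Dx hp)) z).const_mul μ
    exact (h1.sub h2).deriv
  -- differentiate eq 2 in x
  have hDxDtu : Dx (Dt u) z = c ^ 2 * Dx (Dx p) z + (β - μ) * Dx (Dt (Dx p)) z := by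
    rw [hB, Dx]
    have h1 := (hasDerivAt_Dx (contDiff_Dx hp) z).const_mul (c ^ 2)
    have h2 := (hasDerivAt_Dx (contDiff_Dt (contDiff_Dx hp)) z).const_mul (β - μ)
    exact (h1.add h2).deriv
  have hcomm1 : Dt (Dx u) z = Dx (Dt u) z := Dt_Dx_comm hu z
  have hcomm2 : Dx (Dt (Dx p)) z = Dt (Dx (Dx p)) z := (Dt_Dx_comm (contDiff_Dx hp) z).symm
  rw [hcomm2] at hDxDtu
  rw [hDtDxu, hDxDtu] at hcomm1
  linarith
end

section
/- Let f : ℝ → ℝ be smooth and β, c, μ, σ real constants. If p, u, v, w : ℝ × ℝ → ℝ are smooth and satisfy the second-layer potential system ∂ₓv = f(p), ∂ₜv = μ ∂ₓp + u, ∂ₜw = c² p + (β − μ − σ) ∂ₜp, and ∂ₓw = −σ ∂ₓp + u at every point, then the continuity equation ∂ₜT + ∂ₓΦ = 0 holds at every point with conserved density T = v and flux Φ = −(μ + σ) p − w. (This is the nonlocal conservation law of the second-layer potential system, with v = ∂ₓ⁻¹(f(p)).) -/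
/-- `(p, u, v, w)` solves the second-layer potential system
`vₓ = f(p)`, `vₜ = μ pₓ + u`, `wₜ = c² p + (β − μ − σ) pₜ`, `wₓ = −σ pₓ + u`. -/
def SecondLayerPotentialSystem (f : ℝ → ℝ) (β c μ σ : ℝ) (p u v w : ℝ × ℝ → ℝ) : Prop :=
  ∀ z : ℝ × ℝ,
    Dx v z = f (p z) ∧
    Dt v z = μ * Dx p z + u z ∧
    Dt w z = c ^ 2 * p z + (β - μ - σ) * Dt p z ∧
    Dx w z = -σ * Dx p z + u z

/-- Nonlocal conservation law of the second-layer potential system: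
density `T = v` and flux `Φ = −(μ + σ) p − w`. -/
theorem secondLayerPotential_conservation_law
    (f : ℝ → ℝ) (hf : ContDiff ℝ (⊤ : ℕ∞) f) (β c μ σ : ℝ)
    (p u v w : ℝ × ℝ → ℝ)
    (hp : ContDiff ℝ (⊤ : ℕ∞) p) (hu : ContDiff ℝ (⊤ : ℕ∞) u)
    (hv : ContDiff ℝ (⊤ : ℕ∞) v) (hw : ContDiff ℝ (⊤ : ℕ∞) w)
    (hsys : SecondLayerPotentialSystem f β c μ σ p u v w) :
    ∀ z : ℝ × ℝ, Dt v z + Dx (fun w' => -(μ + σ) * p w' - w w') z = 0 := by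

  intro z
  have hpd : DifferentiableAt ℝ (fun y => p (z.1, y)) z.2 :=
    (hp.differentiable (by simp)).comp
      ((differentiable_const _).prodMk differentiable_id) z.2
  have hwd : DifferentiableAt ℝ (fun y => w (z.1, y)) z.2 :=
    (hw.differentiable (by simp)).comp
      ((differentiable_const _).prodMk differentiable_id) z.2
  have hDx : Dx (fun w' => -(μ + σ) * p w' - w w') z
      = -(μ + σ) * Dx p z - Dx w z := by
    unfold Dx
    rw [deriv_fun_sub (by exact (hpd.const_mul _)) hwd, deriv_const_mul _ hpd]
  obtain ⟨h1, h2, h3, h4⟩ := hsys z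
  rw [hDx, h2, h4]
  ring
end

section
/- Let n > 1, κ > 0, β ≠ 0, ν ≠ 0 be real constants with c² − ν² > 0, and let U₀ ≥ 0 be a real constant. Define U : ℝ → ℝ by U(ξ) = ( (c² − ν²) / ( U₀ (c² − ν²) exp( −(c² − ν²)(n − 1) ξ / (β ν) ) + κ ν² ) )^{1/(n−1)} (real power). Then U is differentiable and solves the Bernoulli-type ODE β ν U′(ξ) + ν² κ U(ξ)ⁿ + (ν² − c²) U(ξ) = 0 for all ξ ∈ ℝ, where U(ξ)ⁿ denotes the real power U(ξ)^n. -/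
/-!
Writing `V = U ^ (n - 1)`, the Bernoulli equation `a U' + b Uⁿ + d U = 0` becomes the logistic
equation `a V' + (n - 1) V (b V + d) = 0`, whose solutions are `V = A / (C e^{r x} + B)` with
`a r = (n - 1) d` and `b A + d B = 0`. The profile is `V ^ (1 / (n - 1))` for such a `V`, positive
because `κ ν² > 0` and `U₀ ≥ 0`.
-/

open Real

theorem rpow_one_div_sub_one_rpow {x n : ℝ} (hx : 0 < x) (hn : n ≠ 1) :
    (x ^ (1 / (n - 1))) ^ n = x ^ (1 / (n - 1)) * x := by
  have hexp : 1 / (n - 1) * n = 1 / (n - 1) + 1 := by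
    field_simp [sub_ne_zero.mpr hn]
    ring
  rw [← rpow_mul hx.le, hexp, rpow_add hx, rpow_one]

theorem bernoulli_ode_rpow_of_logistic_ode {a b d n V' ξ : ℝ} {V : ℝ → ℝ} (hn : n ≠ 1)
    (hV : 0 < V ξ) (hV' : HasDerivAt V V' ξ)
    (hlogistic : a * V' + (n - 1) * V ξ * (b * V ξ + d) = 0) :
    a * deriv (fun x => V x ^ (1 / (n - 1))) ξ + b * (V ξ ^ (1 / (n - 1))) ^ n
      + d * V ξ ^ (1 / (n - 1)) = 0 := by
  have hn1 : n - 1 ≠ 0 := sub_ne_zero.mpr hn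
  rw [(hV'.rpow_const (Or.inl hV.ne')).deriv, rpow_one_div_sub_one_rpow hV hn,
    rpow_sub hV, rpow_one]
  field_simp
  linear_combination V ξ ^ (1 / (n - 1)) * hlogistic

theorem hasDerivAt_div_mul_exp_add (A B C r x : ℝ) (hD : C * exp (r * x) + B ≠ 0) :
    HasDerivAt (fun x => A / (C * exp (r * x) + B))
      (-(A * C * r * exp (r * x)) / (C * exp (r * x) + B) ^ 2) x := by
  have hexp : HasDerivAt (fun x => exp (r * x)) (exp (r * x) * r) x := by
    simpa using ((hasDerivAt_id x).const_mul r).exp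
  refine ((hasDerivAt_const x A).div ((hexp.const_mul C).add_const B) hD).congr_deriv ?_
  ring

theorem logistic_ode_div_mul_exp_add {A B C r a b d m x : ℝ} (hD : C * exp (r * x) + B ≠ 0)
    (hr : a * r = m * d) (hB : b * A + d * B = 0) :
    a * (-(A * C * r * exp (r * x)) / (C * exp (r * x) + B) ^ 2)
      + m * (A / (C * exp (r * x) + B)) * (b * (A / (C * exp (r * x) + B)) + d) = 0 := by
  field_simp
  linear_combination (-(A * C * exp (r * x))) * hr + m * A * hB

/-- The explicit profile
`U(ξ) = ((c² − ν²)/(U₀ (c² − ν²) e^{−(c²−ν²)(n−1)ξ/(βν)} + κ ν²))^{1/(n−1)}`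
is differentiable and solves the Bernoulli-type ODE
`β ν U′ + ν² κ Uⁿ + (ν² − c²) U = 0`. -/
theorem bernoulli_profile_solves_ODE
    (n κ β ν c U₀ : ℝ)
    (hn : n > 1) (hκ : κ > 0) (hβ : β ≠ 0) (hν : ν ≠ 0)
    (hc : c ^ 2 - ν ^ 2 > 0) (hU₀ : U₀ ≥ 0) :
    Differentiable ℝ (fun ξ : ℝ =>
      ((c ^ 2 - ν ^ 2) /
        (U₀ * (c ^ 2 - ν ^ 2) * Real.exp (-(c ^ 2 - ν ^ 2) * (n - 1) * ξ / (β * ν))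
          + κ * ν ^ 2)) ^ (1 / (n - 1))) ∧
    ∀ ξ : ℝ,
      β * ν * deriv (fun ξ' : ℝ =>
          ((c ^ 2 - ν ^ 2) /
            (U₀ * (c ^ 2 - ν ^ 2) * Real.exp (-(c ^ 2 - ν ^ 2) * (n - 1) * ξ' / (β * ν))
              + κ * ν ^ 2)) ^ (1 / (n - 1))) ξ
        + ν ^ 2 * κ *
            (((c ^ 2 - ν ^ 2) /
              (U₀ * (c ^ 2 - ν ^ 2) * Real.exp (-(c ^ 2 - ν ^ 2) * (n - 1) * ξ / (β * ν))
                + κ * ν ^ 2)) ^ (1 / (n - 1))) ^ n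
        + (ν ^ 2 - c ^ 2) *
            ((c ^ 2 - ν ^ 2) /
              (U₀ * (c ^ 2 - ν ^ 2) * Real.exp (-(c ^ 2 - ν ^ 2) * (n - 1) * ξ / (β * ν))
                + κ * ν ^ 2)) ^ (1 / (n - 1))
        = 0 := by
  set A := c ^ 2 - ν ^ 2
  set r := -A * (n - 1) / (β * ν)
  have hexponent : ∀ ξ, -A * (n - 1) * ξ / (β * ν) = r * ξ := fun ξ => by ring
  simp only [hexponent]
  have hD : ∀ ξ, 0 < U₀ * A * exp (r * ξ) + κ * ν ^ 2 := fun ξ => by positivity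
  have hV : ∀ ξ, 0 < A / (U₀ * A * exp (r * ξ) + κ * ν ^ 2) := fun ξ => div_pos hc (hD ξ)
  have hV' := fun ξ => hasDerivAt_div_mul_exp_add A (κ * ν ^ 2) (U₀ * A) r ξ (hD ξ).ne'
  refine ⟨fun ξ => ((hV' ξ).rpow_const (Or.inl (hV ξ).ne')).differentiableAt, fun ξ => ?_⟩
  refine bernoulli_ode_rpow_of_logistic_ode hn.ne' (hV ξ) (hV' ξ) ?_
  have hr : β * ν * r = (n - 1) * (ν ^ 2 - c ^ 2) := by
    simp only [r, A]
    field_simp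
    ring
  exact logistic_ode_div_mul_exp_add (hD ξ).ne' hr (by ring)
end

section
/- Let κ > 0, β > 0, ν > 0, U₀ > 0 be real constants with c² − ν² > 0, and define U : ℝ → ℝ by U(ξ) = (c² − ν²) / ( U₀ (c² − ν²) exp( −(c² − ν²) ξ / (β ν) ) + κ ν² ). Then U is a shock-wave profile: U(ξ) → 0 and U′(ξ) → 0 as ξ → −∞, while U(ξ) → (c² − ν²)/(κ ν²) and U′(ξ) → 0 as ξ → +∞. Moreover U(ξ) > 0 for all ξ (the solution is non-singular). -/
open Filter Topology Real

/-!
The profile is a logistic curve `U = A / (B e^{rξ} + K)` with `A, B, K > 0` and `r < 0`.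
Its denominator grows without bound as `ξ → −∞` and tends to `K` as `ξ → +∞`, which gives the two
limits of `U`. For the derivative, differentiating shows that `U` solves the logistic equation
`U' = (r / A) U (K U − A)` (the travelling wave ODE), so `U'` is a continuous function of `U` that
vanishes at both limits `0` and `A / K`.
-/

noncomputable def logisticProfile (A B K r : ℝ) (ξ : ℝ) : ℝ :=
  A / (B * exp (r * ξ) + K)

namespace logisticProfile

variable {A B K r : ℝ}

lemma denom_pos (hB : 0 ≤ B) (hK : 0 < K) (ξ : ℝ) : 0 < B * exp (r * ξ) + K := by
  positivity

lemma pos (hA : 0 < A) (hB : 0 ≤ B) (hK : 0 < K) (ξ : ℝ) : 0 < logisticProfile A B K r ξ :=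
  div_pos hA (denom_pos hB hK ξ)

lemma tendsto_atBot (hr : r < 0) (hB : 0 < B) :
    Tendsto (logisticProfile A B K r) atBot (𝓝 0) := by
  have hexp : Tendsto (fun ξ => exp (r * ξ)) atBot atTop :=
    tendsto_exp_atTop.comp (tendsto_id.const_mul_atBot_of_neg hr)
  exact tendsto_const_nhds.div_atTop (tendsto_atTop_add_const_right _ _ (hexp.const_mul_atTop hB))

lemma tendsto_atTop (hr : r < 0) (hK : K ≠ 0) :
    Tendsto (logisticProfile A B K r) atTop (𝓝 (A / K)) := by
  have hexp : Tendsto (fun ξ => exp (r * ξ)) atTop (𝓝 0) :=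
    tendsto_exp_atBot.comp (tendsto_id.const_mul_atTop_of_neg hr)
  have hdenom : Tendsto (fun ξ => B * exp (r * ξ) + K) atTop (𝓝 K) := by
    simpa using (hexp.const_mul B).add_const K
  exact tendsto_const_nhds.div hdenom hK

lemma hasDerivAt {ξ : ℝ} (hden : B * exp (r * ξ) + K ≠ 0) :
    HasDerivAt (logisticProfile A B K r)
      (r / A * logisticProfile A B K r ξ * (K * logisticProfile A B K r ξ - A)) ξ := by
  have hdenom : HasDerivAt (fun ξ => B * exp (r * ξ) + K) (B * (exp (r * ξ) * r)) ξ := by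
    simpa using ((((hasDerivAt_id ξ).const_mul r).exp).const_mul B).add_const K
  refine ((hasDerivAt_const ξ A).div hdenom hden).congr_deriv ?_
  simp only [logisticProfile]
  field_simp
  ring

lemma deriv_eq (hB : 0 ≤ B) (hK : 0 < K) :
    deriv (logisticProfile A B K r) =
      fun ξ => r / A * logisticProfile A B K r ξ * (K * logisticProfile A B K r ξ - A) :=
  funext fun _ => (hasDerivAt (denom_pos hB hK _).ne').deriv

lemma tendsto_deriv_of_tendsto (hB : 0 ≤ B) (hK : 0 < K) {l : Filter ℝ} {u : ℝ}
    (hU : Tendsto (logisticProfile A B K r) l (𝓝 u)) :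
    Tendsto (deriv (logisticProfile A B K r)) l (𝓝 (r / A * u * (K * u - A))) := by
  rw [deriv_eq hB hK]
  exact (hU.const_mul _).mul ((hU.const_mul K).sub_const A)

lemma tendsto_deriv_atBot (hr : r < 0) (hB : 0 < B) (hK : 0 < K) :
    Tendsto (deriv (logisticProfile A B K r)) atBot (𝓝 0) := by
  simpa using tendsto_deriv_of_tendsto hB.le hK (tendsto_atBot hr hB)

lemma tendsto_deriv_atTop (hr : r < 0) (hB : 0 ≤ B) (hK : 0 < K) :
    Tendsto (deriv (logisticProfile A B K r)) atTop (𝓝 0) := by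
  simpa [mul_div_cancel₀ A hK.ne'] using
    tendsto_deriv_of_tendsto (A := A) hB hK (tendsto_atTop hr hK.ne')

end logisticProfile

/-- The explicit travelling wave profile
`U(ξ) = (c² − ν²)/(U₀ (c² − ν²) e^{−(c²−ν²)ξ/(βν)} + κ ν²)` is a shock wave:
it is everywhere positive, tends to `0` with vanishing derivative as `ξ → −∞`,
and tends to `(c² − ν²)/(κ ν²)` with vanishing derivative as `ξ → +∞`. -/
theorem shock_wave_profile
    (κ β ν c U₀ : ℝ)
    (hκ : κ > 0) (hβ : β > 0) (hν : ν > 0) (hU₀ : U₀ > 0)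
    (hc : c ^ 2 - ν ^ 2 > 0) :
    let U : ℝ → ℝ := fun ξ =>
      (c ^ 2 - ν ^ 2) /
        (U₀ * (c ^ 2 - ν ^ 2) * Real.exp (-(c ^ 2 - ν ^ 2) * ξ / (β * ν)) + κ * ν ^ 2)
    Tendsto U atBot (nhds 0) ∧
    Tendsto (deriv U) atBot (nhds 0) ∧
    Tendsto U atTop (nhds ((c ^ 2 - ν ^ 2) / (κ * ν ^ 2))) ∧
    Tendsto (deriv U) atTop (nhds 0) ∧
    ∀ ξ : ℝ, U ξ > 0 := by
  intro U
  have hU : U = logisticProfile (c ^ 2 - ν ^ 2) (U₀ * (c ^ 2 - ν ^ 2)) (κ * ν ^ 2)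
      (-(c ^ 2 - ν ^ 2) / (β * ν)) := by
    funext ξ
    simp only [U, logisticProfile, mul_div_right_comm]
  have hr : -(c ^ 2 - ν ^ 2) / (β * ν) < 0 :=
    div_neg_of_neg_of_pos (neg_neg_of_pos hc) (mul_pos hβ hν)
  have hB : 0 < U₀ * (c ^ 2 - ν ^ 2) := mul_pos hU₀ hc
  have hK : 0 < κ * ν ^ 2 := by positivity
  rw [hU]
  exact ⟨logisticProfile.tendsto_atBot hr hB,
    logisticProfile.tendsto_deriv_atBot hr hB hK,
    logisticProfile.tendsto_atTop hr hK.ne',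
    logisticProfile.tendsto_deriv_atTop hr hB.le hK,
    logisticProfile.pos hc hB.le hK⟩
end

section
/- Let κ > 0, β > 0, ν > 0, U₀ > 0 be real constants with c² − ν² > 0. Then the function p : ℝ × ℝ → ℝ defined by p(t,x) = (c² − ν²) / ( U₀ (c² − ν²) exp( −(c² − ν²)(x − ν t) / (β ν) ) + κ ν² ) is smooth and solves the Westervelt equation ∂²ₜ( p + κ p² ) − β ∂ₜ∂²ₓp = c² ∂²ₓp at every point (t,x). -/
/- auxiliary travelling-wave profile and its derivatives -/

noncomputable def gA (A K b U₀ : ℝ) : ℝ → ℝ :=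
  fun ξ => A / (U₀ * A * Real.exp (-A * ξ / b) + K)

noncomputable def g1A (A K b U₀ : ℝ) : ℝ → ℝ :=
  fun ξ => (A * gA A K b U₀ ξ - K * (gA A K b U₀ ξ) ^ 2) / b

noncomputable def g2A (A K b U₀ : ℝ) : ℝ → ℝ :=
  fun ξ => (A * g1A A K b U₀ ξ - 2 * K * (gA A K b U₀ ξ * g1A A K b U₀ ξ)) / b

noncomputable def g3A (A K b U₀ : ℝ) : ℝ → ℝ :=
  fun ξ => (A * g2A A K b U₀ ξ -
    2 * K * ((g1A A K b U₀ ξ) ^ 2 + gA A K b U₀ ξ * g2A A K b U₀ ξ)) / b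

lemma denom_pos (A K b U₀ : ℝ) (hA : 0 < A) (hK : 0 < K) (hU : 0 < U₀) (ξ : ℝ) :
    0 < U₀ * A * Real.exp (-A * ξ / b) + K :=
  add_pos (mul_pos (mul_pos hU hA) (Real.exp_pos _)) hK

lemma hg1 (A K b U₀ : ℝ) (hA : 0 < A) (hK : 0 < K) (hb : 0 < b) (hU : 0 < U₀) :
    ∀ ξ, HasDerivAt (gA A K b U₀) (g1A A K b U₀ ξ) ξ := by
  intro ξ
  have hlin : HasDerivAt (fun x : ℝ => -A * x / b) (-A / b) ξ := by
    simpa using ((hasDerivAt_id ξ).const_mul (-A)).div_const b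
  have hE := hlin.exp
  have hDen := (hE.const_mul (U₀ * A)).add_const K
  have hpos := denom_pos A K b U₀ hA hK hU ξ
  have hg := (hasDerivAt_const ξ A).div hDen hpos.ne'
  convert hg using 1
  · rfl
  · rfl
  · rfl
  simp only [g1A, gA]
  field_simp
  ring

lemma hg2 (A K b U₀ : ℝ) (hA : 0 < A) (hK : 0 < K) (hb : 0 < b) (hU : 0 < U₀) :
    ∀ ξ, HasDerivAt (g1A A K b U₀) (g2A A K b U₀ ξ) ξ := by
  intro ξ
  have h := ((((hg1 A K b U₀ hA hK hb hU ξ).const_mul A).sub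
      (((hg1 A K b U₀ hA hK hb hU ξ).pow 2).const_mul K)).div_const b)
  convert h using 1
  · rfl
  · rfl
  · rfl
  simp only [g2A, pow_one]
  push_cast
  ring

lemma hg3 (A K b U₀ : ℝ) (hA : 0 < A) (hK : 0 < K) (hb : 0 < b) (hU : 0 < U₀) :
    ∀ ξ, HasDerivAt (g2A A K b U₀) (g3A A K b U₀ ξ) ξ := by
  intro ξ
  have h := ((((hg2 A K b U₀ hA hK hb hU ξ).const_mul A).sub
      ((((hg1 A K b U₀ hA hK hb hU ξ).mul (hg2 A K b U₀ hA hK hb hU ξ)).const_mul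
        (2 * K)))).div_const b)
  convert h using 1
  · rfl
  · rfl
  · rfl
  simp only [g3A, pow_two]

lemma Dt_shift {ν : ℝ} {w w' : ℝ → ℝ} (hw : ∀ ξ, HasDerivAt w (w' ξ) ξ) :
    Dt (fun z => w (z.2 - ν * z.1)) = fun z => -ν * w' (z.2 - ν * z.1) := by
  funext z
  have hi : HasDerivAt (fun s : ℝ => z.2 - ν * s) (-ν) z.1 := by
    simpa using ((hasDerivAt_id z.1).const_mul ν).const_sub z.2
  have h : HasDerivAt (fun s : ℝ => w (z.2 - ν * s)) (-ν * w' (z.2 - ν * z.1)) z.1 := by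
    simpa [mul_comm, Function.comp_def] using (hw _).comp z.1 hi
  exact h.deriv

lemma Dx_shift {ν : ℝ} {w w' : ℝ → ℝ} (hw : ∀ ξ, HasDerivAt w (w' ξ) ξ) :
    Dx (fun z => w (z.2 - ν * z.1)) = fun z => w' (z.2 - ν * z.1) := by
  funext z
  have hi : HasDerivAt (fun y : ℝ => y - ν * z.1) 1 z.2 := by
    simpa using (hasDerivAt_id z.2).sub_const (ν * z.1)
  have h : HasDerivAt (fun y : ℝ => w (y - ν * z.1)) (w' (z.2 - ν * z.1)) z.2 := by
    simpa [Function.comp_def] using (hw _).comp z.2 hi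
  exact h.deriv

/-- The explicit shock wave
`p(t,x) = (c² − ν²)/(U₀ (c² − ν²) e^{−(c²−ν²)(x−νt)/(βν)} + κ ν²)`
is smooth and solves the Westervelt equation `(p + κ p²)ₜₜ − β pₓₓₜ = c² pₓₓ`. -/
theorem shock_wave_solves_westervelt
    (κ β ν c U₀ : ℝ)
    (hκ : κ > 0) (hβ : β > 0) (hν : ν > 0) (hU₀ : U₀ > 0)
    (hc : c ^ 2 - ν ^ 2 > 0) :
    let p : ℝ × ℝ → ℝ := fun z =>
      (c ^ 2 - ν ^ 2) /
        (U₀ * (c ^ 2 - ν ^ 2) *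
            Real.exp (-(c ^ 2 - ν ^ 2) * (z.2 - ν * z.1) / (β * ν)) + κ * ν ^ 2)
    ContDiff ℝ (⊤ : ℕ∞) p ∧
    ∀ z : ℝ × ℝ,
      Dt (Dt (fun w => p w + κ * (p w) ^ 2)) z - β * Dt (Dx (Dx p)) z
        = c ^ 2 * Dx (Dx p) z := by
  intro p
  have hA : (0:ℝ) < c ^ 2 - ν ^ 2 := hc
  have hK : (0:ℝ) < κ * ν ^ 2 := by positivity
  have hb : (0:ℝ) < β * ν := by positivity
  set A := c ^ 2 - ν ^ 2 with hAdef
  set K := κ * ν ^ 2 with hKdef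
  set b := β * ν with hbdef
  have hG1 := hg1 A K b U₀ hA hK hb hU₀
  have hG2 := hg2 A K b U₀ hA hK hb hU₀
  have hG3 := hg3 A K b U₀ hA hK hb hU₀
  constructor
  · -- smoothness
    apply ContDiff.div contDiff_const
    · apply ContDiff.add _ contDiff_const
      apply ContDiff.mul contDiff_const
      apply ContDiff.exp
      exact (contDiff_const.mul (contDiff_snd.sub (contDiff_const.mul contDiff_fst))).div_const _
    · intro z
      exact (denom_pos A K b U₀ hA hK hU₀ _).ne'
  · intro z
    -- h = g + κ g², its first and second derivatives
    set g := gA A K b U₀ with hgdef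
    set g1 := g1A A K b U₀ with hg1def
    set g2 := g2A A K b U₀ with hg2def
    set g3 := g3A A K b U₀ with hg3def
    have Hh1 : ∀ ξ, HasDerivAt (fun ξ => g ξ + κ * g ξ ^ 2)
        (g1 ξ + κ * 2 * (g ξ * g1 ξ)) ξ := by
      intro ξ
      have h := (hG1 ξ).add (((hG1 ξ).pow 2).const_mul κ)
      convert h using 1
      · rfl
      · rfl
      · rfl
      norm_num
      ring
    have Hh2 : ∀ ξ, HasDerivAt (fun ξ => g1 ξ + κ * 2 * (g ξ * g1 ξ))
        (g2 ξ + κ * 2 * (g1 ξ * g1 ξ + g ξ * g2 ξ)) ξ := by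
      intro ξ
      exact (hG2 ξ).add (((hG1 ξ).mul (hG2 ξ)).const_mul (κ * 2))
    have e1 : Dt (fun w => p w + κ * (p w) ^ 2)
        = fun z => -ν * ((fun ξ => g1 ξ + κ * 2 * (g ξ * g1 ξ)) (z.2 - ν * z.1)) :=
      Dt_shift Hh1
    have e2 : Dt (fun z => -ν * ((fun ξ => g1 ξ + κ * 2 * (g ξ * g1 ξ)) (z.2 - ν * z.1)))
        = fun z => -ν * ((fun ξ => -ν * (g2 ξ + κ * 2 * (g1 ξ * g1 ξ + g ξ * g2 ξ)))
            (z.2 - ν * z.1)) :=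
      Dt_shift (fun ξ => (Hh2 ξ).const_mul (-ν))
    have ex1 : Dx p = fun z => g1 (z.2 - ν * z.1) := Dx_shift hG1
    have ex2 : Dx (fun z => g1 (z.2 - ν * z.1)) = fun z => g2 (z.2 - ν * z.1) :=
      Dx_shift hG2
    have ex3 : Dt (fun z => g2 (z.2 - ν * z.1)) = fun z => -ν * g3 (z.2 - ν * z.1) :=
      Dt_shift hG3
    rw [e1, e2, ex1, ex2, ex3]
    beta_reduce
    set ξ := z.2 - ν * z.1
    have hg3eq : g3 ξ = (A * g2 ξ - 2 * K * ((g1 ξ) ^ 2 + g ξ * g2 ξ)) / b := rfl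
    rw [hg3eq, hAdef, hKdef, hbdef] at *
    field_simp
    ring
end
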